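/- arXiv:2304.02132 — 3 statements merged into one kernel-verified Lean document; each statement's English description precedes it below -/
import Mathlib

section
/- Suppose Λ is a directed partial order and 𝒮 = ⟨⟨S_u : u ∈ Λ⟩, ℛ⟩ is a Λ-system. Then there is a Λ-system 𝒮′ = ⟨⟨S′_u : u ∈ Λ⟩, ℛ′⟩ such that ℛ′ consists of a single relation, width(𝒮′) = width(𝒮), and 𝒮′ has a cofinal branch if and only if 𝒮 has a cofinal branch. -/
/-!
Statement 3: Every Λ-system 𝒮 admits a Λ-system 𝒮′ with a single relation, the
same width, and having a cofinal branch iff 𝒮 does.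
-/

universe u

open Cardinal

/-- `Λ` is `κ`-directed: every subset of size `< κ` has an upper bound. -/
def IsDir (Λ : Type u) [Preorder Λ] (κ : Cardinal.{u}) : Prop :=
  ∀ s : Set Λ, #s < κ → ∃ ub : Λ, ∀ x ∈ s, x ≤ ub

/-- `⟨⟨S_u⟩, ℛ⟩` is a `Λ`-system, where the level of `x : σ` is `ℓ x` (so the
levels `S_u = ℓ ⁻¹' {u}` are automatically pairwise disjoint) and the set of
relations is `{R i | i : ι}`. -/
structure IsLSystem {Λ : Type u} [Preorder Λ] {σ ι : Type u}
    (ℓ : σ → Λ) (R : ι → σ → σ → Prop) : Prop where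
  lvl_ne : ∀ u : Λ, ∃ x : σ, ℓ x = u
  idx_ne : Nonempty ι
  trans : ∀ i : ι, Transitive (R i)
  lt_lvl : ∀ (i : ι) (x y : σ), R i x y → ℓ x < ℓ y
  treelike : ∀ (i : ι) (x y z : σ), R i x z → R i y z → ℓ x ≤ ℓ y → (R i x y ∨ x = y)
  complete : ∀ ⦃u v : Λ⦄, u < v → ∃ (i : ι) (x y : σ), ℓ x = u ∧ ℓ y = v ∧ R i x y

/-- The width of a system: `max(sup_u |S_u|, |ℛ|)`. -/
noncomputable def sysWidth {Λ : Type u} [Preorder Λ] {σ ι : Type u}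
    (ℓ : σ → Λ) (_R : ι → σ → σ → Prop) : Cardinal.{u} :=
  max (⨆ u : Λ, #{x : σ // ℓ x = u}) #ι

/-- `x` and `y` are compatible with respect to the relation `r`. -/
def SysCompat {σ : Type u} (r : σ → σ → Prop) (x y : σ) : Prop :=
  ∃ z : σ, (r x z ∨ x = z) ∧ (r y z ∨ y = z)

/-- `b` is a branch through the relation `r`: pairwise compatible. -/
def IsSysBranch {σ : Type u} (r : σ → σ → Prop) (b : Set σ) : Prop :=
  ∀ x ∈ b, ∀ y ∈ b, SysCompat r x y

/-- The system has a cofinal branch through one of its relations. -/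
def HasCofBranch {Λ : Type u} [Preorder Λ] {σ ι : Type u}
    (ℓ : σ → Λ) (R : ι → σ → σ → Prop) : Prop :=
  ∃ (i : ι) (b : Set σ), IsSysBranch (R i) b ∧ ∀ u : Λ, ∃ x ∈ b, u ≤ ℓ x


/-!
Tagging each element with the index of a relation, `S′_u = S_u × ℛ` with the single relation
`(x, R) <′ (y, R) ↔ x <_R y`, is again a `Λ`-system whose cofinal branches are exactly the
tagged cofinal branches of `𝒮`; its width is `sup_u |S_u| · |ℛ|`, which is the width of `𝒮`
as soon as that width is infinite. If the width is finite, `𝒮` has a cofinal branch by an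
ultrafilter pigeonhole argument, and so does the chain `Λ × F` tagged by a set `F` of that width.
-/

section Basic

variable {Λ : Type u} [Preorder Λ] {σ ι : Type u} {ℓ : σ → Λ} {R : ι → σ → σ → Prop}

theorem IsDir.nonempty (h : IsDir Λ ℵ₀) : Nonempty Λ :=
  let ⟨ub, _⟩ := h ∅ (by simp [aleph0_pos])
  ⟨ub⟩

theorem IsDir.isDirectedOrder (h : IsDir Λ ℵ₀) : IsDirectedOrder Λ := by
  refine ⟨fun a b => ?_⟩
  obtain ⟨ub, hub⟩ := h {a, b} ((Set.finite_singleton b).insert a).lt_aleph0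
  exact ⟨ub, hub a (by simp), hub b (by simp)⟩

theorem IsLSystem.one_le_iSup_mk_level [Nonempty Λ] (hsys : IsLSystem ℓ R) :
    1 ≤ ⨆ u, #{x : σ // ℓ x = u} := by
  obtain ⟨u⟩ := ‹Nonempty Λ›
  obtain ⟨x, hx⟩ := hsys.lvl_ne u
  exact (Cardinal.one_le_iff_ne_zero.2 (mk_ne_zero_iff.2 ⟨⟨x, hx⟩⟩)).trans
    (le_ciSup bddAbove_of_small u)

theorem IsLSystem.hasCofBranch_of_isTop (hsys : IsLSystem ℓ R) {m : Λ} (hm : IsTop m) :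
    HasCofBranch ℓ R := by
  obtain ⟨i⟩ := hsys.idx_ne
  obtain ⟨x, hx⟩ := hsys.lvl_ne m
  refine ⟨i, {x}, ?_, fun u => ⟨x, rfl, hx ▸ hm u⟩⟩
  rintro _ rfl _ rfl
  exact ⟨_, Or.inr rfl, Or.inr rfl⟩

end Basic

section Narrow

variable {Λ : Type u} [PartialOrder Λ] [IsDirectedOrder Λ] [Nonempty Λ]
  {σ ι : Type u} {ℓ : σ → Λ} {R : ι → σ → σ → Prop}

/- Take an ultrafilter `U` refining `atTop`. For each `u`, a `U`-large set of levels `v > u`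
is reached from one and the same `x_u ∈ S_u` through one relation `i_u`, landing on one code
`k_u` in `F`; a `U`-large set of `u` then shares `(i_u, k_u)`, and the corresponding `x_u`
form the branch: two of them are both below the element of code `k` at a common level `v`. -/
theorem IsLSystem.hasCofBranch_of_noMaxOrder [NoMaxOrder Λ] (hsys : IsLSystem ℓ R) [Finite ι]
    {F : Type*} [Finite F] (e : ∀ u, {x : σ // ℓ x = u} ↪ F) : HasCofBranch ℓ R := by
  obtain ⟨U, hU⟩ := Ultrafilter.exists_le (Filter.atTop : Filter Λ)
  have hgt (u : Λ) : ∀ᶠ v in U, u < v := (Filter.eventually_gt_atTop u).filter_mono hU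
  have hge (u : Λ) : ∀ᶠ v in U, u ≤ v := (Filter.eventually_ge_atTop u).filter_mono hU
  have hlink : ∀ u, ∃ c : ι × {x : σ // ℓ x = u} × F,
      ∀ᶠ v in U, ∃ y : {y : σ // ℓ y = v}, e v y = c.2.2 ∧ R c.1 c.2.1 y := by
    intro u
    have : Finite {x : σ // ℓ x = u} := Finite.of_injective _ (e u).injective
    refine Ultrafilter.eventually_exists_iff.1 ((hgt u).mono ?_)
    intro v huv
    obtain ⟨i, x, y, hx, hy, hxy⟩ := hsys.complete huv
    exact ⟨(i, ⟨x, hx⟩, e v ⟨y, hy⟩), ⟨y, hy⟩, rfl, hxy⟩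
  choose c hc using hlink
  obtain ⟨⟨i, k⟩, hik⟩ : ∃ ik : ι × F, ∀ᶠ u in U, ((c u).1, (c u).2.2) = ik :=
    Ultrafilter.eventually_exists_iff.1 (Filter.Eventually.of_forall fun u => ⟨_, rfl⟩)
  refine ⟨i, (fun u => ((c u).2.1 : σ)) '' {u | ((c u).1, (c u).2.2) = (i, k)}, ?_, ?_⟩
  · rintro _ ⟨u, hu, rfl⟩ _ ⟨u', hu', rfl⟩
    obtain ⟨v, ⟨y, hy, hxy⟩, ⟨y', hy', hxy'⟩⟩ := ((hc u).and (hc u')).exists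
    simp only [Prod.mk.injEq] at hu hu'
    obtain rfl : y = y' := (e v).injective (by rw [hy, hy', hu.2, hu'.2])
    exact ⟨y, Or.inl (hu.1 ▸ hxy), Or.inl (hu'.1 ▸ hxy')⟩
  · intro w
    obtain ⟨u, hu, hwu⟩ := (hik.and (hge w)).exists
    exact ⟨(c u).2.1, ⟨u, hu, rfl⟩, hwu.trans_eq (c u).2.1.2.symm⟩

theorem IsLSystem.hasCofBranch_of_finite (hsys : IsLSystem ℓ R) [Finite ι]
    {F : Type*} [Finite F] (e : ∀ u, {x : σ // ℓ x = u} ↪ F) : HasCofBranch ℓ R := by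
  by_cases htop : ∃ m : Λ, IsTop m
  · obtain ⟨m, hm⟩ := htop
    exact hsys.hasCofBranch_of_isTop hm
  · have : NoMaxOrder Λ :=
      ⟨fun a => (isTop_or_exists_gt a).resolve_left fun ha => htop ⟨a, ha⟩⟩
    exact hsys.hasCofBranch_of_noMaxOrder e

theorem IsLSystem.hasCofBranch_of_sysWidth_lt_aleph0 (hsys : IsLSystem ℓ R)
    (hw : sysWidth ℓ R < ℵ₀) : HasCofBranch ℓ R := by
  have hι : Finite ι := (lt_aleph0_iff_finite (α := ι)).1 ((le_max_right _ _).trans_lt hw)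
  have hF : Finite (sysWidth ℓ R).out := lt_aleph0_iff_finite.1 ((mk_out _).symm ▸ hw)
  refine hsys.hasCofBranch_of_finite (F := (sysWidth ℓ R).out) fun u => Classical.choice ?_
  rw [← le_def, mk_out]
  exact (le_ciSup bddAbove_of_small u).trans (le_max_left _ _)

end Narrow

section Tagged

variable {Λ : Type u} [Preorder Λ] {σ ι : Type u} {ℓ : σ → Λ} {R : ι → σ → σ → Prop}

def taggedLevel (ℓ : σ → Λ) (p : σ × ι) : Λ := ℓ p.1

def taggedRel (R : ι → σ → σ → Prop) (_ : PUnit.{u + 1}) (p q : σ × ι) : Prop :=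
  p.2 = q.2 ∧ R q.2 p.1 q.1

theorem sysCompat_taggedRel_iff {t : PUnit} {p q : σ × ι} :
    SysCompat (taggedRel R t) p q ↔ p.2 = q.2 ∧ SysCompat (R p.2) p.1 q.1 := by
  constructor
  · rintro ⟨z, hp, hq⟩
    have hpz : p.2 = z.2 := by rcases hp with ⟨h, -⟩ | rfl; exacts [h, rfl]
    have hqz : q.2 = z.2 := by rcases hq with ⟨h, -⟩ | rfl; exacts [h, rfl]
    refine ⟨hpz.trans hqz.symm, z.1, ?_, ?_⟩
    · rcases hp with ⟨-, h⟩ | rfl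
      exacts [Or.inl (hpz ▸ h), Or.inr rfl]
    · rcases hq with ⟨-, h⟩ | rfl
      exacts [Or.inl (hpz ▸ h), Or.inr rfl]
  · rintro ⟨hpq, z, hp, hq⟩
    refine ⟨(z, p.2), ?_, ?_⟩
    · rcases hp with h | h
      exacts [Or.inl ⟨rfl, h⟩, Or.inr (Prod.ext h rfl)]
    · rcases hq with h | h
      exacts [Or.inl ⟨hpq.symm, h⟩, Or.inr (Prod.ext h hpq.symm)]

theorem IsLSystem.tagged (hsys : IsLSystem ℓ R) : IsLSystem (taggedLevel ℓ) (taggedRel R) where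
  lvl_ne u := by
    obtain ⟨x, hx⟩ := hsys.lvl_ne u
    obtain ⟨i⟩ := hsys.idx_ne
    exact ⟨(x, i), hx⟩
  idx_ne := ⟨PUnit.unit⟩
  trans _ p q r := by
    rintro ⟨hpq, h₁⟩ ⟨hqr, h₂⟩
    exact ⟨hpq.trans hqr, hsys.trans r.2 (hqr ▸ h₁) h₂⟩
  lt_lvl _ p q h := hsys.lt_lvl q.2 p.1 q.1 h.2
  treelike _ x y z := by
    rintro ⟨hxz, h₁⟩ ⟨hyz, h₂⟩ hxy
    rcases hsys.treelike z.2 x.1 y.1 z.1 h₁ h₂ hxy with h | h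
    exacts [Or.inl ⟨hxz.trans hyz.symm, hyz ▸ h⟩, Or.inr (Prod.ext h (hxz.trans hyz.symm))]
  complete u v huv := by
    obtain ⟨i, x, y, hx, hy, hxy⟩ := hsys.complete huv
    exact ⟨PUnit.unit, (x, i), (y, i), hx, hy, rfl, hxy⟩

theorem IsLSystem.sysWidth_tagged [Nonempty Λ] (hsys : IsLSystem ℓ R) :
    sysWidth (taggedLevel ℓ) (taggedRel R) = (⨆ u, #{x : σ // ℓ x = u}) * #ι := by
  have hlevel (u : Λ) : #{p : σ × ι // taggedLevel ℓ p = u} = #{x : σ // ℓ x = u} * #ι :=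
    mk_congr (Equiv.prodSubtypeFstEquivSubtypeProd (p := fun x => ℓ x = u))
  rw [sysWidth, mk_punit, max_eq_left hsys.tagged.one_le_iSup_mk_level, Cardinal.ciSup_mul]
  simp only [hlevel]

theorem IsLSystem.sysWidth_tagged_of_aleph0_le [Nonempty Λ] (hsys : IsLSystem ℓ R)
    (hw : ℵ₀ ≤ sysWidth ℓ R) : sysWidth (taggedLevel ℓ) (taggedRel R) = sysWidth ℓ R := by
  have hs : (⨆ u, #{x : σ // ℓ x = u}) ≠ 0 :=
    Cardinal.one_le_iff_ne_zero.1 hsys.one_le_iSup_mk_level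
  have hι : #ι ≠ 0 := mk_ne_zero_iff.2 hsys.idx_ne
  rw [hsys.sysWidth_tagged, sysWidth]
  rcases le_max_iff.1 hw with h | h
  exacts [mul_eq_max_of_aleph0_le_left h hι, mul_eq_max_of_aleph0_le_right hs h]

theorem hasCofBranch_tagged_iff [Nonempty Λ] :
    HasCofBranch (taggedLevel ℓ) (taggedRel R) ↔ HasCofBranch ℓ R := by
  constructor
  · rintro ⟨_, b, hb, hcof⟩
    obtain ⟨p₀, hp₀, -⟩ := hcof (Classical.arbitrary Λ)
    have htag : ∀ p ∈ b, p = (p.1, p₀.2) := fun p hp =>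
      Prod.ext rfl (sysCompat_taggedRel_iff.1 (hb p hp p₀ hp₀)).1
    refine ⟨p₀.2, {x | (x, p₀.2) ∈ b}, fun x hx y hy => ?_, fun u => ?_⟩
    · exact (sysCompat_taggedRel_iff.1 (hb _ hx _ hy)).2
    · obtain ⟨p, hp, hup⟩ := hcof u
      exact ⟨p.1, htag p hp ▸ hp, hup⟩
  · rintro ⟨i, b, hb, hcof⟩
    refine ⟨PUnit.unit, (·, i) '' b, ?_, fun u => ?_⟩
    · rintro _ ⟨x, hx, rfl⟩ _ ⟨y, hy, rfl⟩
      exact sysCompat_taggedRel_iff.2 ⟨rfl, hb x hx y hy⟩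
    · obtain ⟨x, hx, hux⟩ := hcof u
      exact ⟨(x, i), ⟨x, hx, rfl⟩, hux⟩

end Tagged

def chainRel {Λ : Type u} [Preorder Λ] (F : Type u) (_ : F) (u v : Λ) : Prop := u < v

section Chain

variable {Λ : Type u} [PartialOrder Λ] {F : Type u}

theorem isLSystem_chain [Nonempty F] : IsLSystem (id : Λ → Λ) (chainRel F) where
  lvl_ne u := ⟨u, rfl⟩
  idx_ne := ‹_›
  trans _ _ _ _ := lt_trans
  lt_lvl _ _ _ h := h
  treelike _ _ _ _ _ _ hxy := lt_or_eq_of_le hxy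
  complete u v huv := ⟨Classical.arbitrary F, u, v, rfl, rfl, huv⟩

theorem hasCofBranch_chain [IsDirectedOrder Λ] [Nonempty F] :
    HasCofBranch (id : Λ → Λ) (chainRel F) := by
  refine ⟨Classical.arbitrary F, Set.univ, fun x _ y _ => ?_, fun u => ⟨u, trivial, le_rfl⟩⟩
  obtain ⟨z, hxz, hyz⟩ := exists_ge_ge x y
  exact ⟨z, lt_or_eq_of_le hxz, lt_or_eq_of_le hyz⟩

end Chain

theorem stmt3_general {Λ : Type u} [PartialOrder Λ]
    (hdir : IsDir Λ ℵ₀)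
    {σ ι : Type u} (ℓ : σ → Λ) (R : ι → σ → σ → Prop)
    (hsys : IsLSystem ℓ R) :
    ∃ (σ' ι' : Type u) (ℓ' : σ' → Λ) (R' : ι' → σ' → σ' → Prop),
      IsLSystem ℓ' R' ∧ #ι' = 1 ∧ sysWidth ℓ' R' = sysWidth ℓ R ∧
      (HasCofBranch ℓ' R' ↔ HasCofBranch ℓ R) := by
  have := hdir.nonempty
  have := hdir.isDirectedOrder
  by_cases hw : ℵ₀ ≤ sysWidth ℓ R
  · exact ⟨_, _, _, _, hsys.tagged, mk_punit, hsys.sysWidth_tagged_of_aleph0_le hw,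
      hasCofBranch_tagged_iff⟩
  set F := (sysWidth ℓ R).out
  have : Nonempty F := mk_ne_zero_iff.1 <| (mk_out _).trans_ne <|
    Cardinal.one_le_iff_ne_zero.1 (hsys.one_le_iSup_mk_level.trans (le_max_left _ _))
  refine ⟨_, _, _, _, (isLSystem_chain (Λ := Λ) (F := F)).tagged, mk_punit, ?_,
    iff_of_true (hasCofBranch_tagged_iff.2 hasCofBranch_chain)
      (hsys.hasCofBranch_of_sysWidth_lt_aleph0 (not_le.1 hw))⟩
  have hlevel (u : Λ) : #{x : Λ // id x = u} = 1 := mk_eq_one {x : Λ // x = u}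
  simp only [isLSystem_chain.sysWidth_tagged, hlevel, ciSup_const, one_mul, F, mk_out]

theorem stmt3 {Λ : Type u} [PartialOrder Λ]
    (hdir : IsDir Λ ℵ₀) (hnomax : ∀ u : Λ, ∃ v : Λ, u < v)
    {σ ι : Type u} (ℓ : σ → Λ) (R : ι → σ → σ → Prop)
    (hsys : IsLSystem ℓ R) :
    ∃ (σ' ι' : Type u) (ℓ' : σ' → Λ) (R' : ι' → σ' → σ' → Prop),
      IsLSystem ℓ' R' ∧ #ι' = 1 ∧ sysWidth ℓ' R' = sysWidth ℓ R ∧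
      (HasCofBranch ℓ' R' ↔ HasCofBranch ℓ R) :=
  stmt3_general hdir ℓ R hsys
end

section
/- Suppose Λ is a directed partial order such that every narrow Λ-system has a cofinal branch (NSP(Λ)). Then for every infinite regular cardinal θ with θ⁺ < d_Λ, there is no strongly unbounded subadditive coloring c : Λ^{[2]} → θ. -/
universe u

open Cardinal

/-- The directedness of `Λ`: the largest `κ` such that `Λ` is `κ`-directed. -/
noncomputable def dirCard (Λ : Type u) [Preorder Λ] : Cardinal.{u} :=
  sSup {κ : Cardinal.{u} | IsDir Λ κ}

/-- `c` is subadditive on pairs `u <_Λ v`. -/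
def IsSubadditiveColoring {Λ : Type u} [Preorder Λ] (c : Λ → Λ → Ordinal.{u}) : Prop :=
  ∀ ⦃u v w : Λ⦄, u < v → v < w →
    c u w ≤ max (c u v) (c v w) ∧ c u v ≤ max (c u w) (c v w)

/-- `c : Λ^{[2]} → θ` is strongly unbounded: on every cofinal `Γ ⊆ Λ`, the image
of `Γ^{[2]}` under `c` is unbounded in `θ`. -/
def StronglyUnbounded {Λ : Type u} [Preorder Λ] (θ : Cardinal.{u})
    (c : Λ → Λ → Ordinal.{u}) : Prop :=
  ∀ Γ : Set Λ, (∀ u : Λ, ∃ v ∈ Γ, u ≤ v) →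
    ∀ i : Ordinal.{u}, i < θ.ord → ∃ u ∈ Γ, ∃ v ∈ Γ, u < v ∧ i ≤ c u v

/-!
Given a subadditive colouring `c : Λ^{[2]} → θ`, the relations `R_i = {(u, v) : u < v, c(u, v) ≤ i}`
for `i < θ` turn the singleton levels `S_u = {u}` into a `Λ`-system of width `θ`: subadditivity is
exactly transitivity and tree-likeness of each `R_i`. Since `θ⁺ < d_Λ` the system is narrow, so by
NSP it has a cofinal branch through some `R_i`. That branch is a cofinal subset of `Λ` on which `c`
is bounded by `i < θ`, so `c` is not strongly unbounded.
-/

def colorRel {Λ : Type u} [Preorder Λ] (c : Λ → Λ → Ordinal.{u}) (i : Ordinal.{u}) (x y : Λ) :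
    Prop :=
  x < y ∧ c x y ≤ i

namespace IsSubadditiveColoring

variable {Λ : Type u} [PartialOrder Λ] {c : Λ → Λ → Ordinal.{u}}

theorem isLSystem_colorRel (hsub : IsSubadditiveColoring c) {ι : Type u} [Nonempty ι]
    (f : ι → Ordinal.{u}) (hf : ∀ ⦃u v : Λ⦄, u < v → ∃ i, f i = c u v) :
    IsLSystem (id : Λ → Λ) fun i => colorRel c (f i) where
  lvl_ne u := ⟨u, rfl⟩
  idx_ne := inferInstance
  trans _ _ _ _ := fun ⟨hxy, hcxy⟩ ⟨hyz, hcyz⟩ =>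
    ⟨hxy.trans hyz, (hsub hxy hyz).1.trans (max_le hcxy hcyz)⟩
  lt_lvl _ _ _ h := h.1
  treelike _ x y _ := fun ⟨_, hcxz⟩ ⟨hyz, hcyz⟩ (hxy : x ≤ y) =>
    hxy.lt_or_eq.imp (fun h => ⟨h, (hsub h hyz).2.trans (max_le hcxz hcyz)⟩) id
  complete u v huv := by
    obtain ⟨i, hi⟩ := hf huv
    exact ⟨i, u, v, rfl, rfl, huv, hi.ge⟩

theorem le_of_isSysBranch_colorRel (hsub : IsSubadditiveColoring c) {i : Ordinal.{u}}
    {b : Set Λ} (hb : IsSysBranch (colorRel c i) b) {u v : Λ} (hu : u ∈ b) (hv : v ∈ b)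
    (huv : u < v) : c u v ≤ i := by
  obtain ⟨z, huz | rfl, hvz | rfl⟩ := hb u hu v hv
  · exact (hsub huv hvz.1).2.trans (max_le huz.2 hvz.2)
  · exact huz.2
  · exact absurd (huv.trans hvz.1) (lt_irrefl _)
  · exact absurd huv (lt_irrefl _)

end IsSubadditiveColoring

theorem sysWidth_id {Λ ι : Type u} [Preorder Λ] [Nonempty ι] (R : ι → Λ → Λ → Prop) :
    sysWidth (id : Λ → Λ) R = #ι := by
  refine max_eq_right (ciSup_le' fun u => ?_)
  calc #{x : Λ // id x = u} ≤ 1 := mk_le_one_iff_set_subsingleton.2 fun _ ha _ hb => ha.trans hb.symm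
    _ ≤ #ι := Cardinal.one_le_iff_ne_zero.2 (mk_ne_zero ι)

theorem StronglyUnbounded.not_bounded_of_cofinal {Λ : Type u} [Preorder Λ] {θ : Cardinal.{u}}
    {c : Λ → Λ → Ordinal.{u}} (hunb : StronglyUnbounded θ c) (hθ : ℵ₀ ≤ θ) {Γ : Set Λ}
    (hΓ : ∀ u : Λ, ∃ v ∈ Γ, u ≤ v) {i : Ordinal.{u}} (hi : i < θ.ord) :
    ¬ ∀ u ∈ Γ, ∀ v ∈ Γ, u < v → c u v ≤ i := fun hbdd => by
  obtain ⟨u, hu, v, hv, huv, hle⟩ := hunb Γ hΓ (Order.succ i) ((isSuccLimit_ord hθ).succ_lt hi)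
  exact (Order.succ_le_iff.1 hle).not_ge (hbdd u hu v hv huv)

theorem stmt6_general {Λ : Type u} [PartialOrder Λ]
    (hNSP : ∀ (σ ι : Type u) (ℓ : σ → Λ) (R : ι → σ → σ → Prop),
      IsLSystem ℓ R → Order.succ (sysWidth ℓ R) < dirCard Λ → HasCofBranch ℓ R)
    (θ : Cardinal.{u}) (hθinf : ℵ₀ ≤ θ)
    (hθd : Order.succ θ < dirCard Λ) :
    ¬ ∃ c : Λ → Λ → Ordinal.{u},
        (∀ ⦃u v : Λ⦄, u < v → c u v < θ.ord) ∧
        IsSubadditiveColoring c ∧ StronglyUnbounded θ c := by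
  rintro ⟨c, hc, hsub, hunb⟩
  have : Nonempty θ.ord.ToType :=
    Ordinal.nonempty_toType_iff.2 (isSuccLimit_ord hθinf).pos.ne'
  let f : θ.ord.ToType → Ordinal.{u} := fun i => (Ordinal.ToType.toOrd i).1
  have hsys := hsub.isLSystem_colorRel f fun u v huv =>
    ⟨Ordinal.ToType.mk ⟨c u v, hc huv⟩, by simp [f]⟩
  have hnarrow : Order.succ (sysWidth id fun i => colorRel c (f i)) < dirCard Λ := by
    rwa [sysWidth_id, mk_ord_toType]
  obtain ⟨i, b, hb, hcof⟩ := hNSP Λ _ id _ hsys hnarrow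
  exact hunb.not_bounded_of_cofinal hθinf hcof (Ordinal.ToType.toOrd i).2
    fun _ hu _ hv => hsub.le_of_isSysBranch_colorRel hb hu hv

theorem stmt6 {Λ : Type u} [PartialOrder Λ]
    (hdir : IsDir Λ ℵ₀) (hnomax : ∀ u : Λ, ∃ v : Λ, u < v)
    (hNSP : ∀ (σ ι : Type u) (ℓ : σ → Λ) (R : ι → σ → σ → Prop),
      IsLSystem ℓ R → Order.succ (sysWidth ℓ R) < dirCard Λ → HasCofBranch ℓ R)
    (θ : Cardinal.{u}) (hθreg : θ.IsRegular) (hθinf : ℵ₀ ≤ θ)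
    (hθd : Order.succ θ < dirCard Λ) :
    ¬ ∃ c : Λ → Λ → Ordinal.{u},
        (∀ ⦃u v : Λ⦄, u < v → c u v < θ.ord) ∧
        IsSubadditiveColoring c ∧ StronglyUnbounded θ c :=
  stmt6_general hNSP θ hθinf hθd
end

section
/- Suppose Λ is a directed partial order with no maximal element, 𝒮 is a narrow Λ-system with width θ, ℙ is a θ⁺-closed forcing poset, and ℙ forces that there exists a full set of branches in 𝒮. Then, in the ground model, 𝒮 has a cofinal branch. -/
/-!
Statement 15 (preservation lemma): Suppose Λ is a directed partial order with no
maximal element, 𝒮 is a narrow Λ-system of width θ, ℙ is a θ⁺-closed forcing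
poset, and ℙ forces that there is a full set of branches in 𝒮. Then 𝒮 has a
cofinal branch in the ground model.

The forcing is modelled abstractly: the names ⟨ḃ_i : i ∈ I⟩ (with |I| = θ) for
the full set of branches are given by the relation `forc q i x` ("q ⊩ x ∈ ḃ_i"),
and `Rsel q i j` means "q ⊩ ḃ_i is a branch through R_j". The hypotheses record
exactly that these relations are ℙ-names which ℙ forces to constitute a full set
of branches in 𝒮.
-/

universe u

open Cardinal

/-!
Suppose there is no cofinal branch. If a condition `A` does not force the name `ḃ_i` (read as
a branch through `R j`) to be bounded, the points that extensions of `A` put into `ḃ_i` form a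
cofinal branch in the ground model, unless extensions of `A` and of another condition `B` force
incompatible points into it. Hence any two conditions have extensions that *separate* `(i, j)`
below some level, and by `θ⁺`-closure one pair of extensions separates all `θ` many pairs
`(i, j)` at once. Iterating this splitting along a binary tree of height `δ`, the least cardinal
with `2 ^ δ > θ³`, uses only `θ` many (or finitely many) nodes, so narrowness bounds all
separation levels by a single level `U`. Each of the `2 ^ δ` branches of the tree has a lower
bound, which can be extended to decide an index `i`, a relation `R j` and a point of `ḃ_i` on
level `U`; two branches decide the same data, which contradicts the separation at the node
where they split.
-/

section ChainClosed

variable {θ : Cardinal.{u}}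

/-- Finite orders are admitted because for finite `θ` the splitting tree has finite height,
possibly larger than `θ`. -/
def IsShortOrder (θ : Cardinal.{u}) (V : Type u) [LinearOrder V] [WellFoundedLT V] : Prop :=
  Ordinal.type ((· < ·) : V → V → Prop) ≤ θ.ord ∨ Finite V

lemma IsShortOrder.of_orderEmbedding {V W : Type u} [LinearOrder V] [WellFoundedLT V]
    [LinearOrder W] [WellFoundedLT W] (f : V ↪o W) (h : IsShortOrder θ W) :
    IsShortOrder θ V :=
  h.imp (le_trans (RelEmbedding.ordinal_type_le f.ltEmbedding))
    fun hW => @Finite.of_injective _ _ hW f f.injective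

lemma IsShortOrder.Iio {W : Type u} [LinearOrder W] [WellFoundedLT W] (h : IsShortOrder θ W)
    (w : W) : IsShortOrder θ (Set.Iio w) :=
  h.of_orderEmbedding (OrderEmbedding.subtype _)

def ChainClosed (θ : Cardinal.{u}) (Q : Type u) [Preorder Q] : Prop :=
  ∀ (V : Type u) [LinearOrder V] [WellFoundedLT V], IsShortOrder θ V →
    ∀ g : V → Q, Antitone g → ∃ l, ∀ v, l ≤ g v

variable {Q : Type u} [Preorder Q]

theorem chainClosed_of_ordinal
    (h : ∀ o : Ordinal.{u}, o ≤ θ.ord → ∀ f : ∀ i : Ordinal.{u}, i < o → Q,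
      (∀ (i j : Ordinal.{u}) (hi : i < o) (hj : j < o), i ≤ j → f j hj ≤ f i hi) →
      ∃ l : Q, ∀ (i : Ordinal.{u}) (hi : i < o), l ≤ f i hi) :
    ChainClosed θ Q := by
  intro V _ _ hV g hg
  by_cases htype : Ordinal.type ((· < ·) : V → V → Prop) ≤ θ.ord
  · obtain ⟨l, hl⟩ := h _ htype (fun i hi => g (Ordinal.enum (· < ·) ⟨i, hi⟩))
      fun i j hi hj hij => hg (le_of_not_gt ((Ordinal.enum_le_enum _).2 hij))
    refine ⟨l, fun v => ?_⟩
    simpa only [Ordinal.enum_typein] using hl _ (Ordinal.typein_lt_type _ v)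
  · have : Finite V := hV.resolve_left htype
    have : Nonempty V := by
      by_contra hV
      rw [not_nonempty_iff, ← Ordinal.type_eq_zero_iff_isEmpty (r := (· < ·))] at hV
      exact htype (hV ▸ zero_le)
    obtain ⟨m, hm⟩ := Finite.exists_max (id : V → V)
    exact ⟨g m, fun v => hg (hm v)⟩

theorem ChainClosed.prod {Q' : Type u} [Preorder Q'] (h : ChainClosed θ Q)
    (h' : ChainClosed θ Q') : ChainClosed θ (Q × Q') := by
  intro V _ _ hV g hg
  obtain ⟨l, hl⟩ := h V hV (Prod.fst ∘ g) (monotone_fst.comp_antitone hg)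
  obtain ⟨l', hl'⟩ := h' V hV (Prod.snd ∘ g) (monotone_snd.comp_antitone hg)
  exact ⟨(l, l'), fun v => ⟨hl v, hl' v⟩⟩

theorem ChainClosed.nonempty (h : ChainClosed θ Q) : Nonempty Q :=
  let ⟨l, _⟩ := h PEmpty (Or.inr inferInstance) PEmpty.elim fun v => v.elim
  ⟨l⟩

open Classical in
noncomputable def chainBound {V : Type u} (c : Q) (g : V → Q) : Q :=
  if h : ∃ l ≤ c, ∀ v, l ≤ g v then h.choose else c

lemma chainBound_le_base {V : Type u} (c : Q) (g : V → Q) : chainBound c g ≤ c := by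
  unfold chainBound
  split_ifs with h
  exacts [h.choose_spec.1, le_rfl]

lemma ChainClosed.chainBound_le (hQ : ChainClosed θ Q) {V : Type u} [LinearOrder V]
    [WellFoundedLT V] (hV : IsShortOrder θ V) {c : Q} {g : V → Q} (hg : Antitone g)
    (hc : ∀ v, g v ≤ c) (v : V) : chainBound c g ≤ g v := by
  have hex : ∃ l ≤ c, ∀ v, l ≤ g v := by
    obtain ⟨l, hl⟩ := hQ V hV g hg
    rcases isEmpty_or_nonempty V with hV | ⟨⟨v₀⟩⟩
    · exact ⟨c, le_rfl, isEmptyElim⟩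
    · exact ⟨l, (hl v₀).trans (hc v₀), hl⟩
  rw [chainBound, dif_pos hex]
  exact hex.choose_spec.2 v

variable {W : Type u} [LinearOrder W] [WellFoundedLT W]

noncomputable def chainRec (c : Q) (F : Q → W → Q) : W → Q :=
  wellFounded_lt.fix fun w IH => F (chainBound c fun v : Set.Iio w => IH v v.2) w

lemma chainRec_eq (c : Q) (F : Q → W → Q) (w : W) :
    chainRec c F w = F (chainBound c fun v : Set.Iio w => chainRec c F v) w :=
  wellFounded_lt.fix_eq _ w

lemma chainRec_congr (c : Q) {F F' : Q → W → Q} (w : W) (h : ∀ v ≤ w, ∀ p, F p v = F' p v) :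
    chainRec c F w = chainRec c F' w := by
  induction w using WellFoundedLT.induction with
  | ind w IH =>
    rw [chainRec_eq, chainRec_eq, h w le_rfl]
    congr 3
    funext v
    exact IH v v.2 fun u hu => h u (hu.trans v.2.le)

lemma ChainClosed.chainRec_spec (hQ : ChainClosed θ Q) (hW : IsShortOrder θ W) (c : Q)
    {F : Q → W → Q} (hF : ∀ p w, F p w ≤ p) :
    Antitone (chainRec c F) ∧ ∀ w, chainRec c F w ≤ c := by
  have key : ∀ w, (∀ v < w, chainRec c F w ≤ chainRec c F v) ∧ chainRec c F w ≤ c := by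
    intro w
    induction w using WellFoundedLT.induction with
    | ind w IH =>
      have hanti : Antitone fun v : Set.Iio w => chainRec c F v := fun v v' hvv' =>
        hvv'.eq_or_lt.elim (fun h => h ▸ le_rfl) fun h => (IH v' v'.2).1 v h
      rw [chainRec_eq]
      refine ⟨fun v hv => (hF _ w).trans (hQ.chainBound_le (hW.Iio w) hanti
        (fun v => (IH v v.2).2) ⟨v, hv⟩), (hF _ w).trans (chainBound_le_base _ _)⟩
  exact ⟨fun v w hvw => hvw.eq_or_lt.elim (fun h => h ▸ le_rfl) fun h => (key w).1 v h,
    fun w => (key w).2⟩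

theorem ChainClosed.exists_le_forall_mem (hQ : ChainClosed θ Q) (hW : IsShortOrder θ W)
    {K : Type u} (π : W → K) (hπ : Function.Surjective π) (D : K → Set Q)
    (hD : ∀ k, IsLowerSet (D k)) (hdense : ∀ k p, ∃ p' ≤ p, p' ∈ D k) (c : Q) :
    ∃ p ≤ c, ∀ k, p ∈ D k := by
  choose F hF hFD using fun p w => hdense (π w) p
  obtain ⟨hanti, hc⟩ := hQ.chainRec_spec hW c hF
  refine ⟨chainBound c (chainRec c F), chainBound_le_base _ _, fun k => ?_⟩
  obtain ⟨w, rfl⟩ := hπ k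
  refine hD _ (hQ.chainBound_le hW hanti hc w) ?_
  rw [chainRec_eq]
  exact hFD _ w

end ChainClosed

section Tree

variable {θ : Cardinal.{u}} {Q : Type u} [Preorder Q] {W : Type u} [LinearOrder W]
  [WellFoundedLT W]

noncomputable def treeBranch (p₀ : Q) (S : Q → Bool → Q) (f : W → Bool) : W → Q :=
  chainRec p₀ fun c α => S c (f α)

noncomputable def treeNode (p₀ : Q) (S : Q → Bool → Q) (k : Σ α : W, (Set.Iio α → Bool)) : Q :=
  chainBound p₀ fun v : Set.Iio k.1 =>
    treeBranch p₀ S (fun β => if h : β < k.1 then k.2 ⟨β, h⟩ else false) v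

lemma treeBranch_eq (p₀ : Q) (S : Q → Bool → Q) (f : W → Bool) (α : W) :
    treeBranch p₀ S f α = S (treeNode p₀ S ⟨α, fun β => f β⟩) (f α) := by
  rw [treeBranch, chainRec_eq, treeNode]
  congr 2
  funext v
  refine chainRec_congr _ _ fun β hβ _ => ?_
  simp only [dif_pos (hβ.trans_lt v.2)]

theorem ChainClosed.exists_split_of_mk_lt (hQ : ChainClosed θ Q) (hW : IsShortOrder θ W)
    (p₀ : Q) {S : Q → Bool → Q} (hS : ∀ c b, S c b ≤ c) {C : Type u} (col : Q → C)
    (hC : #C < 2 ^ #W) :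
    ∃ (k : Σ α : W, (Set.Iio α → Bool)) (q q' : Q), col q = col q' ∧
      q ≤ S (treeNode p₀ S k) false ∧ q' ≤ S (treeNode p₀ S k) true := by
  have hbranch : ∀ f : W → Bool, ∃ q, ∀ α, q ≤ treeBranch p₀ S f α := fun f =>
    let ⟨hanti, hle⟩ := hQ.chainRec_spec hW p₀ fun c α => hS c (f α)
    ⟨_, hQ.chainBound_le hW hanti hle⟩
  choose q hq using hbranch
  obtain ⟨f, g, hcol, hfg⟩ : ∃ f g, col (q f) = col (q g) ∧ f ≠ g := by
    by_contra! h
    have hinj : Function.Injective (col ∘ q) := fun f g hfg => h f g hfg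
    have := Cardinal.mk_le_of_injective hinj
    rw [Cardinal.mk_arrow, Cardinal.lift_uzero, Cardinal.mk_bool, Cardinal.lift_two] at this
    exact this.not_gt hC
  obtain ⟨α, hα, hmin⟩ := wellFounded_lt.has_min {α | f α ≠ g α} (Function.ne_iff.1 hfg)
  have hnode : (⟨α, fun β => f β⟩ : Σ α : W, (Set.Iio α → Bool)) = ⟨α, fun β => g β⟩ := by
    congr 1
    funext β
    exact not_not.1 fun h => hmin β h β.2
  have hf := hq f α
  have hg := hq g α
  rw [treeBranch_eq] at hf hg
  rw [hnode] at hf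
  cases hfα : f α <;> cases hgα : g α <;> simp only [hfα, hgα, ne_eq, Set.mem_ofPred_eq,
    not_true_eq_false] at hf hg hα
  · exact ⟨_, _, _, hcol, hf, hg⟩
  · exact ⟨_, _, _, hcol.symm, hg, hf⟩

end Tree

section Small

def IsSmall (θ κ : Cardinal.{u}) : Prop :=
  κ < ℵ₀ ∨ κ ≤ θ

variable {θ κ μ : Cardinal.{u}}

lemma isSmall_self : IsSmall θ θ :=
  Or.inr le_rfl

lemma IsSmall.mono (h : IsSmall θ κ) (hμ : μ ≤ κ) : IsSmall θ μ :=
  h.imp hμ.trans_lt hμ.trans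

lemma IsSmall.mul (hκ : IsSmall θ κ) (hμ : IsSmall θ μ) : IsSmall θ (κ * μ) := by
  rcases lt_or_ge θ ℵ₀ with hθ | hθ
  · have hfin : ∀ {c}, IsSmall θ c → c < ℵ₀ := fun h => h.elim id (·.trans_lt hθ)
    exact Or.inl (mul_lt_aleph0 (hfin hκ) (hfin hμ))
  · have hle : ∀ {c}, IsSmall θ c → c ≤ θ := fun h => h.elim (fun h => h.le.trans hθ) id
    exact Or.inr ((mul_le_mul' (hle hκ) (hle hμ)).trans (mul_eq_self hθ).le)

lemma IsSmall.mk_prod {α β : Type u} (hα : IsSmall θ #α) (hβ : IsSmall θ #β) :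
    IsSmall θ #(α × β) := by
  simpa using hα.mul hβ

lemma IsSmall.isShortOrder (h : IsSmall θ κ) : IsShortOrder θ κ.ord.ToType :=
  h.symm.imp (fun h => (Ordinal.type_toType _).trans_le (ord_le_ord.2 h))
    fun h => lt_aleph0_iff_finite.1 ((mk_ord_toType κ).trans_lt h)

noncomputable def treeHeight (τ : Cardinal.{u}) : Cardinal.{u} :=
  sInf {δ | τ < 2 ^ δ}

lemma lt_two_pow_treeHeight (τ : Cardinal.{u}) : τ < 2 ^ treeHeight τ :=
  csInf_mem (s := {δ | τ < 2 ^ δ}) ⟨τ, cantor τ⟩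

lemma treeHeight_le (τ : Cardinal.{u}) : treeHeight τ ≤ τ :=
  csInf_le' (cantor τ)

lemma two_pow_le_of_lt_treeHeight {τ : Cardinal.{u}} (h : μ < treeHeight τ) : 2 ^ μ ≤ τ :=
  le_of_not_gt fun h' => (csInf_le' (show μ ∈ {δ | τ < 2 ^ δ} from h')).not_gt h

lemma mk_treeNodes_le (τ : Cardinal.{u}) :
    #(Σ α : (treeHeight τ).ord.ToType, (Set.Iio α → Bool)) ≤ treeHeight τ * τ := by
  have hnode : ∀ α : (treeHeight τ).ord.ToType, #(Set.Iio α → Bool) ≤ τ := fun α => by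
    rw [mk_arrow, lift_uzero, mk_bool, lift_two]
    exact two_pow_le_of_lt_treeHeight (by simpa using mk_Iio_lt α (by simp))
  calc #(Σ α : (treeHeight τ).ord.ToType, (Set.Iio α → Bool))
      ≤ sum fun _ : (treeHeight τ).ord.ToType => τ := by
        rw [mk_sigma]
        exact sum_le_sum _ _ hnode
    _ = treeHeight τ * τ := by rw [sum_const', mk_ord_toType]

lemma IsSmall.treeHeight {τ : Cardinal.{u}} (hτ : IsSmall θ τ) : IsSmall θ (_root_.treeHeight τ) :=
  hτ.mono (treeHeight_le τ)

lemma IsSmall.treeNodes {τ : Cardinal.{u}} (hτ : IsSmall θ τ) :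
    IsSmall θ #(Σ α : (_root_.treeHeight τ).ord.ToType, (Set.Iio α → Bool)) :=
  (hτ.treeHeight.mul hτ).mono (mk_treeNodes_le τ)

end Small

section Names

variable {Λ σ ι I P : Type u} [Preorder P] {ℓ : σ → Λ} {R : ι → σ → σ → Prop}
  {forc : P → I → σ → Prop} {Rsel : P → I → ι → Prop}

structure ForcesFullBranches (ℓ : σ → Λ) (R : ι → σ → σ → Prop) (forc : P → I → σ → Prop)
    (Rsel : P → I → ι → Prop) : Prop where
  forc_anti : ∀ ⦃q q' : P⦄, q' ≤ q → ∀ (i : I) (x : σ), forc q i x → forc q' i x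
  rsel_anti : ∀ ⦃q q' : P⦄, q' ≤ q → ∀ (i : I) (j : ι), Rsel q i j → Rsel q' i j
  exists_rsel : ∀ (q : P) (i : I), ∃ q' ≤ q, ∃ j : ι, Rsel q' i j
  sysCompat : ∀ (q : P) (i : I) (j : ι) (x y : σ),
    Rsel q i j → forc q i x → forc q i y → SysCompat (R j) x y
  full : ∀ (q : P) (u : Λ), ∃ q' ≤ q, ∃ (i : I) (x : σ), forc q' i x ∧ ℓ x = u

lemma ForcesFullBranches.exists_forces_at_level (hN : ForcesFullBranches ℓ R forc Rsel)
    (q : P) (u : Λ) : ∃ r ≤ q, ∃ (i : I) (j : ι) (y : σ), Rsel r i j ∧ forc r i y ∧ ℓ y = u := by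
  obtain ⟨q', hq', i, y, hy, rfl⟩ := hN.full q u
  obtain ⟨r, hr, j, hj⟩ := hN.exists_rsel q' i
  exact ⟨r, hr.trans hq', i, j, y, hj, hN.forc_anti hr i y hy, rfl⟩

end Names

section Systems

variable {Λ σ ι I P : Type u} [Preorder Λ] [Preorder P] {ℓ : σ → Λ}
  {R : ι → σ → σ → Prop} {forc : P → I → σ → Prop} {Rsel : P → I → ι → Prop} {θ : Cardinal.{u}}

lemma bddAbove_of_mk_lt_dirCard {s : Set Λ} (hs : #s < dirCard Λ) : BddAbove s := by
  by_contra hs'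
  refine hs.not_ge (csSup_le ⟨0, fun t ht => (ht.not_ge zero_le).elim⟩ fun κ hκ => ?_)
  exact le_of_not_gt fun hsκ => hs' (hκ s hsκ)

lemma isDirectedOrder_of_two_lt_dirCard (h : 2 < dirCard Λ) : IsDirectedOrder Λ := by
  refine ⟨fun x y => ?_⟩
  have hxy : #({x, y} : Set Λ) ≤ 2 :=
    mk_insert_le.trans (by rw [mk_singleton, one_add_one_eq_two])
  obtain ⟨z, hz⟩ := bddAbove_of_mk_lt_dirCard (hxy.trans_lt h)
  exact ⟨z, hz (by simp), hz (by simp)⟩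

lemma bddAbove_of_isSmall [IsDirectedOrder Λ] (hθ : θ < dirCard Λ) {s : Set Λ}
    (hs : IsSmall θ #s) : BddAbove s := by
  rcases hs with hs | hs
  · have : Nonempty Λ :=
      ⟨(bddAbove_of_mk_lt_dirCard (s := ∅) (by simpa using zero_le.trans_lt hθ)).some⟩
    exact (lt_aleph0_iff_set_finite.1 hs).bddAbove
  · exact bddAbove_of_mk_lt_dirCard (hs.trans_lt hθ)

lemma mk_level_le_sysWidth (u : Λ) : #{x : σ // ℓ x = u} ≤ sysWidth ℓ R :=
  (le_ciSup bddAbove_of_small u).trans (le_max_left _ _)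

lemma mk_le_sysWidth : #ι ≤ sysWidth ℓ R :=
  le_max_right _ _

lemma IsLSystem.rel_or_eq_of_sysCompat (hsys : IsLSystem ℓ R) {j : ι} {x z : σ}
    (h : SysCompat (R j) x z) (hle : ℓ x ≤ ℓ z) : R j x z ∨ x = z := by
  obtain ⟨w, hx, hz | rfl⟩ := h
  · rcases hx with hx | rfl
    · exact hsys.treelike j x z w hx hz hle
    · exact ((hsys.lt_lvl j z x hz).not_ge hle).elim
  · exact hx

lemma IsLSystem.sysCompat_of_sysCompat_of_le (hsys : IsLSystem ℓ R) {j : ι} {x y z : σ}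
    (hx : SysCompat (R j) x z) (hy : SysCompat (R j) y z) (hxz : ℓ x ≤ ℓ z)
    (hyz : ℓ y ≤ ℓ z) : SysCompat (R j) x y :=
  ⟨z, hsys.rel_or_eq_of_sysCompat hx hxz, hsys.rel_or_eq_of_sysCompat hy hyz⟩

variable (ℓ R forc Rsel) in
def ForcesNoneAbove (q : P) (i : I) (j : ι) (u : Λ) : Prop :=
  ∀ r ≤ q, ∀ x, Rsel r i j → forc r i x → ¬ u ≤ ℓ x

variable (ℓ R forc Rsel) in
/-- `a` and `b` disagree about `ḃ_i` as a branch through `R j` by level `u`: one of them forces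
`ḃ_i` to stay below `u`, or they force incompatible points of level at most `u` into it. -/
def Separates (a b : P) (i : I) (j : ι) (u : Λ) : Prop :=
  ForcesNoneAbove ℓ forc Rsel a i j u ∨ ForcesNoneAbove ℓ forc Rsel b i j u ∨
    ∃ x y, ℓ x ≤ u ∧ ℓ y ≤ u ∧ Rsel a i j ∧ forc a i x ∧ Rsel b i j ∧ forc b i y ∧
      ¬ SysCompat (R j) x y

lemma Separates.anti (hN : ForcesFullBranches ℓ R forc Rsel) {a b a' b' : P} (ha : a' ≤ a)
    (hb : b' ≤ b) {i : I} {j : ι} {u : Λ} (h : Separates ℓ R forc Rsel a b i j u) :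
    Separates ℓ R forc Rsel a' b' i j u := by
  rcases h with h | h | ⟨x, y, hx, hy, hax, hxa, hby, hyb, hxy⟩
  · exact Or.inl fun r hr => h r (hr.trans ha)
  · exact Or.inr (Or.inl fun r hr => h r (hr.trans hb))
  · exact Or.inr (Or.inr ⟨x, y, hx, hy, hN.rsel_anti ha i j hax, hN.forc_anti ha i x hxa,
      hN.rsel_anti hb i j hby, hN.forc_anti hb i y hyb, hxy⟩)

/-- The points that extensions of `A` put into `ḃ_i` form a ground-model set, cofinal by `hA`;
two of them are compatible because both lie below a higher point put into `ḃ_i` by an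
extension of `B`. -/
theorem exists_incompatible_of_not_hasCofBranch [IsDirectedOrder Λ] (hsys : IsLSystem ℓ R)
    (hcon : ¬ HasCofBranch ℓ R) {A B : P} {i : I} {j : ι}
    (hA : ∀ u, ¬ ForcesNoneAbove ℓ forc Rsel A i j u)
    (hB : ∀ u, ¬ ForcesNoneAbove ℓ forc Rsel B i j u) :
    ∃ a ≤ A, ∃ b ≤ B, ∃ x y, Rsel a i j ∧ forc a i x ∧ Rsel b i j ∧ forc b i y ∧
      ¬ SysCompat (R j) x y := by
  by_contra! hno
  simp only [ForcesNoneAbove, not_forall, not_not, exists_prop] at hA hB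
  refine hcon ⟨j, {x | ∃ a ≤ A, Rsel a i j ∧ forc a i x}, ?_, fun u => ?_⟩
  · rintro x ⟨a, ha, hax, hx⟩ y ⟨a', ha', hay, hy⟩
    obtain ⟨m, hxm, hym⟩ := exists_ge_ge (ℓ x) (ℓ y)
    obtain ⟨b, hb, z, hbz, hz, hmz⟩ := hB m
    exact hsys.sysCompat_of_sysCompat_of_le (hno a ha b hb x z hax hx hbz hz)
      (hno a' ha' b hb y z hay hy hbz hz) (hxm.trans hmz) (hym.trans hmz)
  · obtain ⟨a, ha, x, hax, hx, hux⟩ := hA u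
    exact ⟨x, ⟨a, ha, hax, hx⟩, hux⟩

theorem exists_separates [IsDirectedOrder Λ] (hsys : IsLSystem ℓ R)
    (hcon : ¬ HasCofBranch ℓ R) (A B : P) (i : I) (j : ι) :
    ∃ a ≤ A, ∃ b ≤ B, ∃ u, Separates ℓ R forc Rsel a b i j u := by
  by_cases hA : ∃ u, ForcesNoneAbove ℓ forc Rsel A i j u
  · obtain ⟨u, hu⟩ := hA
    exact ⟨A, le_rfl, B, le_rfl, u, Or.inl hu⟩
  by_cases hB : ∃ u, ForcesNoneAbove ℓ forc Rsel B i j u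
  · obtain ⟨u, hu⟩ := hB
    exact ⟨A, le_rfl, B, le_rfl, u, Or.inr (Or.inl hu)⟩
  simp only [not_exists] at hA hB
  obtain ⟨a, ha, b, hb, x, y, hax, hx, hby, hy, hxy⟩ :=
    exists_incompatible_of_not_hasCofBranch hsys hcon hA hB
  obtain ⟨u, hxu, hyu⟩ := exists_ge_ge (ℓ x) (ℓ y)
  exact ⟨a, ha, b, hb, u, Or.inr (Or.inr ⟨x, y, hxu, hyu, hax, hx, hby, hy, hxy⟩)⟩

theorem ChainClosed.exists_separating_pair [IsDirectedOrder Λ] (hP : ChainClosed θ P)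
    (hIι : IsSmall θ #(I × ι)) (hsys : IsLSystem ℓ R) (hcon : ¬ HasCofBranch ℓ R)
    (hN : ForcesFullBranches ℓ R forc Rsel) (c : P) :
    ∃ p ≤ (c, c), ∀ i j, ∃ u, Separates ℓ R forc Rsel p.1 p.2 i j u := by
  obtain ⟨e⟩ : Nonempty ((#(I × ι)).ord.ToType ≃ I × ι) := Cardinal.eq.1 (mk_ord_toType _)
  obtain ⟨p, hp, hsep⟩ := (hP.prod hP).exists_le_forall_mem hIι.isShortOrder e e.surjective
    (fun k => {p | ∃ u, Separates ℓ R forc Rsel p.1 p.2 k.1 k.2 u})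
    (fun _ _ _ hp ⟨u, hu⟩ => ⟨u, hu.anti hN hp.1 hp.2⟩)
    (fun k p => let ⟨a, ha, b, hb, u, hu⟩ := exists_separates hsys hcon p.1 p.2 k.1 k.2
      ⟨(a, b), ⟨ha, hb⟩, u, hu⟩) (c, c)
  exact ⟨p, hp, fun i j => hsep (i, j)⟩

theorem ForcesFullBranches.not_separates (hN : ForcesFullBranches ℓ R forc Rsel)
    (hsys : IsLSystem ℓ R) {a b ra rb : P} {i : I} {j : ι} {y : σ} {u : Λ} (hra : ra ≤ a)
    (hrb : rb ≤ b) (hsa : Rsel ra i j) (hya : forc ra i y) (hsb : Rsel rb i j)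
    (hyb : forc rb i y) (hu : u ≤ ℓ y) : ¬ Separates ℓ R forc Rsel a b i j u := by
  rintro (h | h | ⟨x, x', hx, hx', -, hxa, -, hxb, hxx'⟩)
  · exact h ra hra y hsa hya hu
  · exact h rb hrb y hsb hyb hu
  · exact hxx' (hsys.sysCompat_of_sysCompat_of_le
      (hN.sysCompat ra i j x y hsa (hN.forc_anti hra i x hxa) hya)
      (hN.sysCompat rb i j x' y hsb (hN.forc_anti hrb i x' hxb) hyb)
      (hx.trans hu) (hx'.trans hu))

end Systems

theorem hasCofBranch_of_forcesFullBranches {Λ σ ι I P : Type u} [Preorder Λ] [Preorder P]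
    {ℓ : σ → Λ} {R : ι → σ → σ → Prop} {forc : P → I → σ → Prop} {Rsel : P → I → ι → Prop}
    {θ : Cardinal.{u}} (hsys : IsLSystem ℓ R) (hlev : ∀ u, #{x : σ // ℓ x = u} ≤ θ)
    (hι : #ι ≤ θ) (hI : #I ≤ θ) (hnarrow : Order.succ θ < dirCard Λ) (hP : ChainClosed θ P)
    (hN : ForcesFullBranches ℓ R forc Rsel) : HasCofBranch ℓ R := by
  by_contra hcon
  have hθ : 1 ≤ θ := (Cardinal.one_le_iff_ne_zero.2 (mk_ne_zero_iff.2 hsys.idx_ne)).trans hι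
  have h2 : 2 ≤ Order.succ θ := by
    rw [← one_add_one_eq_two]
    exact (add_le_add hθ le_rfl).trans (add_one_le_of_lt (Order.lt_succ θ))
  have : IsDirectedOrder Λ := isDirectedOrder_of_two_lt_dirCard (h2.trans_lt hnarrow)
  have hIι : IsSmall θ #(I × ι) := (isSmall_self.mono hI).mk_prod (isSmall_self.mono hι)
  obtain ⟨p₀⟩ := hP.nonempty
  choose S hS lev hlev_sep using hP.exists_separating_pair hIι hsys hcon hN
  let split : P → Bool → P := fun c b => cond b (S c).2 (S c).1
  have hτ : IsSmall θ (θ * (θ * θ)) := isSmall_self.mul (isSmall_self.mul isSmall_self)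
  obtain ⟨U, hU⟩ := bddAbove_of_isSmall ((Order.lt_succ θ).trans hnarrow)
    ((hτ.treeNodes.mk_prod hIι).mono
      (mk_range_le (f := fun k => lev (treeNode p₀ split k.1) k.2.1 k.2.2)))
  choose r hr i j y hsel hforc hy using fun q => hN.exists_forces_at_level q U
  have hcard : #(I × ι × {x // ℓ x = U}) < 2 ^ #(treeHeight (θ * (θ * θ))).ord.ToType := by
    rw [mk_ord_toType]
    refine lt_of_le_of_lt ?_ (lt_two_pow_treeHeight _)
    simpa using mul_le_mul' hI (mul_le_mul' hι (hlev U))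
  obtain ⟨k, q, q', hcol, hq, hq'⟩ := hP.exists_split_of_mk_lt hτ.treeHeight.isShortOrder p₀
    (S := split) (fun c b => by cases b; exacts [(hS c).1, (hS c).2])
    (fun q => (i q, j q, (⟨y q, hy q⟩ : {x // ℓ x = U}))) hcard
  simp only [Prod.mk.injEq, Subtype.mk.injEq] at hcol
  obtain ⟨hi, hj, hyy⟩ := hcol
  have hsel' := hsel q'
  have hforc' := hforc q'
  rw [← hi, ← hj] at hsel'
  rw [← hi, ← hyy] at hforc'
  exact hN.not_separates hsys ((hr q).trans hq) ((hr q').trans hq') (hsel q) (hforc q) hsel'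
    hforc' ((hU ⟨(k, i q, j q), rfl⟩).trans (hy q).ge) (hlev_sep _ _ _)

theorem stmt15_general {Λ : Type u} [PartialOrder Λ]
    {σ ι : Type u} (ℓ : σ → Λ) (R : ι → σ → σ → Prop)
    (hsys : IsLSystem ℓ R)
    (θ : Cardinal.{u}) (hθ : θ = sysWidth ℓ R)
    -- 𝒮 is narrow: width(𝒮)⁺ < d_Λ
    (hnarrow : Order.succ θ < dirCard Λ)
    (P : Type u) [Preorder P]
    -- ℙ is θ⁺-closed: decreasing sequences of length ≤ θ have lower bounds
    (hclosed : ∀ o : Ordinal.{u}, o ≤ θ.ord → ∀ f : ∀ i : Ordinal.{u}, i < o → P,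
      (∀ (i j : Ordinal.{u}) (hi : i < o) (hj : j < o), i ≤ j → f j hj ≤ f i hi) →
      ∃ l : P, ∀ (i : Ordinal.{u}) (hi : i < o), l ≤ f i hi)
    (I : Type u) (hI : #I = θ)
    (forc : P → I → σ → Prop) (Rsel : P → I → ι → Prop)
    -- names: forced statements persist under extension
    (hmono : ∀ ⦃q q' : P⦄, q' ≤ q → ∀ (i : I) (x : σ), forc q i x → forc q' i x)
    (hmonoR : ∀ ⦃q q' : P⦄, q' ≤ q → ∀ (i : I) (j : ι), Rsel q i j → Rsel q' i j)
    -- ℙ forces each ḃ_i to be a branch through some relation of 𝒮: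
    (hdec : ∀ (q : P) (i : I), ∃ q' : P, q' ≤ q ∧ ∃ j : ι, Rsel q' i j)
    (hbr : ∀ (q : P) (i : I) (j : ι) (x y : σ),
      Rsel q i j → forc q i x → forc q i y → SysCompat (R j) x y)
    -- ℙ forces {ḃ_i : i ∈ I} to be full: every level is met by some ḃ_i
    (hfull : ∀ (q : P) (u : Λ), ∃ q' : P, q' ≤ q ∧ ∃ (i : I) (x : σ),
      forc q' i x ∧ ℓ x = u) :
    HasCofBranch ℓ R := by
  subst hθ
  exact hasCofBranch_of_forcesFullBranches hsys mk_level_le_sysWidth mk_le_sysWidth hI.le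
    hnarrow (chainClosed_of_ordinal hclosed) ⟨hmono, hmonoR, hdec, hbr, hfull⟩

theorem stmt15 {Λ : Type u} [PartialOrder Λ]
    (hnomax : ∀ u : Λ, ∃ v : Λ, u < v)
    {σ ι : Type u} (ℓ : σ → Λ) (R : ι → σ → σ → Prop)
    (hsys : IsLSystem ℓ R)
    (θ : Cardinal.{u}) (hθ : θ = sysWidth ℓ R)
    -- 𝒮 is narrow: width(𝒮)⁺ < d_Λ
    (hnarrow : Order.succ θ < dirCard Λ)
    (P : Type u) [Preorder P]
    -- ℙ is θ⁺-closed: decreasing sequences of length ≤ θ have lower bounds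
    (hclosed : ∀ o : Ordinal.{u}, o ≤ θ.ord → ∀ f : ∀ i : Ordinal.{u}, i < o → P,
      (∀ (i j : Ordinal.{u}) (hi : i < o) (hj : j < o), i ≤ j → f j hj ≤ f i hi) →
      ∃ l : P, ∀ (i : Ordinal.{u}) (hi : i < o), l ≤ f i hi)
    (I : Type u) (hI : #I = θ)
    (forc : P → I → σ → Prop) (Rsel : P → I → ι → Prop)
    -- names: forced statements persist under extension
    (hmono : ∀ ⦃q q' : P⦄, q' ≤ q → ∀ (i : I) (x : σ), forc q i x → forc q' i x)
    (hmonoR : ∀ ⦃q q' : P⦄, q' ≤ q → ∀ (i : I) (j : ι), Rsel q i j → Rsel q' i j)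
    -- ℙ forces each ḃ_i to be a branch through some relation of 𝒮:
    (hdec : ∀ (q : P) (i : I), ∃ q' : P, q' ≤ q ∧ ∃ j : ι, Rsel q' i j)
    (hbr : ∀ (q : P) (i : I) (j : ι) (x y : σ),
      Rsel q i j → forc q i x → forc q i y → SysCompat (R j) x y)
    -- ℙ forces {ḃ_i : i ∈ I} to be full: every level is met by some ḃ_i
    (hfull : ∀ (q : P) (u : Λ), ∃ q' : P, q' ≤ q ∧ ∃ (i : I) (x : σ),
      forc q' i x ∧ ℓ x = u) :
    HasCofBranch ℓ R :=
  stmt15_general ℓ R hsys θ hθ hnarrow P hclosed I hI forc Rsel hmono hmonoR hdec hbr hfull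
end
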